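/- arXiv:1902.05381 — 10 statements merged into one kernel-verified Lean document; each statement's English description precedes it below -/
import Mathlib

section
/- Let r ≥ 2 and a ≥ 2 be even integers, s ≥ 0, t ≥ 1, and let c be an integer with -1 ≤ c ≤ a-2 such that a divides tr+s+c. For every integer k ≥ 0, setting d = (r/a)*(tr+s+c) + (t-1)*r + k, there exist at least t distinct integers x with (d+s)/(r+a) ≤ x ≤ d/r. -/
theorem stmt_3 (r a t s c k : ℤ) (hr : 2 ≤ r) (hre : Even r) (ha : 2 ≤ a) (hae : Even a)
    (ht : 1 ≤ t) (hs : 0 ≤ s) (hc1 : -1 ≤ c) (hc2 : c ≤ a - 2)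
    (hdvd : a ∣ t * r + s + c) (hk : 0 ≤ k)
    (d : ℤ) (hd : d = r * ((t * r + s + c) / a) + (t - 1) * r + k) :
    ∃ S : Finset ℤ, t ≤ (S.card : ℤ) ∧
      ∀ x ∈ S, ((d + s : ℤ) : ℚ) / ((r + a : ℤ) : ℚ) ≤ (x : ℚ) ∧
        (x : ℚ) ≤ ((d : ℤ) : ℚ) / (r : ℚ) := by
  obtain ⟨m, hm⟩ := hdvd
  have ha0 : a ≠ 0 := by omega
  have hma : (t * r + s + c) / a = m := by
    rw [hm]; exact Int.mul_ediv_cancel_left m ha0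
  rw [hma] at hd
  have hr0 : (0:ℤ) < r := by omega
  have hra : (0:ℤ) < r + a := by omega
  set q := k / r with hq
  set e := (r + c - k) / (r + a) with he
  have hk1 : r * q + k % r = k := Int.mul_ediv_add_emod k r
  have hk2 : 0 ≤ k % r := Int.emod_nonneg k (by omega)
  have hk3 : k % r < r := Int.emod_lt_of_pos k hr0
  have he1 : (r + a) * e + (r + c - k) % (r + a) = r + c - k := Int.mul_ediv_add_emod _ _
  have he2 : 0 ≤ (r + c - k) % (r + a) := Int.emod_nonneg _ (by omega)
  have he3 : (r + c - k) % (r + a) < r + a := Int.emod_lt_of_pos _ hra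
  have hq0 : 0 ≤ q := Int.ediv_nonneg hk (le_of_lt hr0)
  have hqe : 0 ≤ q + e := by
    by_contra h
    push_neg at h
    have h1 : q + e ≤ -1 := by omega
    have h2 : (q + e) * (r + a) ≤ (-1) * (r + a) :=
      mul_le_mul_of_nonneg_right h1 (by omega)
    nlinarith [mul_nonneg hq0 (by omega : (0:ℤ) ≤ a)]
  refine ⟨Finset.Icc (m - e) (m + t - 1 + q), ?_, ?_⟩
  · rw [Int.card_Icc]
    have h1 : m + t - 1 + q + 1 - (m - e) = t + q + e := by ring
    rw [h1, Int.toNat_of_nonneg (by omega)]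
    omega
  · intro x hx
    rw [Finset.mem_Icc] at hx
    obtain ⟨hx1, hx2⟩ := hx
    constructor
    · rw [div_le_iff₀ (by exact_mod_cast hra)]
      have hint : d + s ≤ x * (r + a) := by
        have h2 : (m - e) * (r + a) ≤ x * (r + a) :=
          mul_le_mul_of_nonneg_right hx1 (by omega)
        nlinarith
      exact_mod_cast hint
    · rw [le_div_iff₀ (by exact_mod_cast hr0)]
      have hint : x * r ≤ d := by
        have h2 : x * r ≤ (m + t - 1 + q) * r :=
          mul_le_mul_of_nonneg_right hx2 (by omega)
        nlinarith
      exact_mod_cast hint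
end

section
/- Let r ≥ 1, a ≥ 2, t ≥ 1 be integers and s ≥ 0, and let c be an integer with 1 ≤ c ≤ a such that a divides tr+s+c. For every integer k ≥ 1, setting d = (r/a)*(tr+s+c) + (t-1)*r + k, there exist at least t distinct integers x with (d+s)/(r+a) < x < d/r. -/
theorem stmt_4 (r a t s c k : ℤ) (hr : 1 ≤ r) (ha : 2 ≤ a) (ht : 1 ≤ t) (hs : 0 ≤ s)
    (hc1 : 1 ≤ c) (hc2 : c ≤ a) (hdvd : a ∣ t * r + s + c) (hk : 1 ≤ k)
    (d : ℤ) (hd : d = r * ((t * r + s + c) / a) + (t - 1) * r + k) :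
    ∃ S : Finset ℤ, t ≤ (S.card : ℤ) ∧
      ∀ x ∈ S, ((d + s : ℤ) : ℚ) / ((r + a : ℤ) : ℚ) < (x : ℚ) ∧
        (x : ℚ) < ((d : ℤ) : ℚ) / (r : ℚ) := by
  set q : ℤ := (t * r + s + c) / a with hqdef
  have hq : a * q = t * r + s + c := Int.mul_ediv_cancel' hdvd
  set m : ℤ := (k - r - c) / (r + a) with hmdef
  have hra : (0:ℤ) < r + a := by linarith
  have hdm := Int.mul_ediv_add_emod (k - r - c) (r + a)
  have hmod1 : 0 ≤ (k - r - c) % (r + a) := Int.emod_nonneg _ (by linarith)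
  have hmod2 : (k - r - c) % (r + a) < r + a := Int.emod_lt_of_pos _ hra
  rw [← hmdef] at hdm
  have hm1 : (r + a) * m ≤ k - r - c := by linarith
  have hm2 : k - r - c < (r + a) * (m + 1) := by nlinarith
  have hrm : r * m ≤ k - r - 1 := by
    rcases lt_trichotomy m 0 with h | h | h
    · nlinarith
    · rw [h] at hm1 ⊢; simp at hm1 ⊢; linarith
    · nlinarith
  refine ⟨Finset.image (fun j : ℕ => q + m + 1 + j) (Finset.range t.toNat), ?_, ?_⟩
  · rw [Finset.card_image_of_injective _ (by intro x y hxy; simpa using hxy)]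
    simp [Int.toNat_of_nonneg (by linarith : (0:ℤ) ≤ t)]
  · intro x hx
    simp only [Finset.mem_image, Finset.mem_range] at hx
    obtain ⟨j, hj, rfl⟩ := hx
    have hjt : (j : ℤ) ≤ t - 1 := by
      have := Int.toNat_of_nonneg (by linarith : (0:ℤ) ≤ t)
      omega
    have hj0 : (0:ℤ) ≤ (j:ℤ) := Int.natCast_nonneg j
    constructor
    · rw [div_lt_iff₀ (by exact_mod_cast hra)]
      have hint : d + s < (q + m + 1 + (j:ℤ)) * (r + a) := by nlinarith
      exact_mod_cast hint
    · rw [lt_div_iff₀ (by exact_mod_cast (by linarith : (0:ℤ) < r))]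
      have hint : (q + m + 1 + (j:ℤ)) * r < d := by nlinarith
      exact_mod_cast hint
end

section
/- Let r ≥ 1, a ≥ 2, t ≥ 1 be integers and s ≥ 0, and let c be an integer with 1 ≤ c ≤ a such that a divides tr+s+c. Setting d = (r/a)*(tr+s+c) + (t-1)*r, the number of integers x satisfying (d+s)/(r+a) < x < d/r is exactly t - 1. -/
theorem stmt_5 (r a t s c : ℤ) (hr : 1 ≤ r) (ha : 2 ≤ a) (ht : 1 ≤ t) (hs : 0 ≤ s)
    (hc1 : 1 ≤ c) (hc2 : c ≤ a) (hdvd : a ∣ t * r + s + c)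
    (d : ℤ) (hd : d = r * ((t * r + s + c) / a) + (t - 1) * r) :
    {x : ℤ | ((d + s : ℤ) : ℚ) / ((r + a : ℤ) : ℚ) < (x : ℚ) ∧
      (x : ℚ) < ((d : ℤ) : ℚ) / (r : ℚ)}.ncard = (t - 1).toNat := by
  obtain ⟨q, hq⟩ := hdvd
  have hq' : (t * r + s + c) / a = q := by
    rw [hq, Int.mul_ediv_cancel_left _ (by omega : a ≠ 0)]
  rw [hq'] at hd
  have hr0 : (0:ℤ) < r := by omega
  have hra : (0:ℤ) < r + a := by omega
  have hrQ : (0:ℚ) < (r:ℚ) := by exact_mod_cast hr0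
  have hraQ : (0:ℚ) < ((r + a : ℤ):ℚ) := by exact_mod_cast hra
  have key : {x : ℤ | ((d + s : ℤ) : ℚ) / ((r + a : ℤ) : ℚ) < (x : ℚ) ∧
      (x : ℚ) < ((d : ℤ) : ℚ) / (r : ℚ)} = ↑(Finset.Ico q (q + (t - 1))) := by
    ext x
    simp only [Finset.coe_Ico, Set.mem_Ico, Set.mem_setOf_eq]
    rw [div_lt_iff₀ hraQ, lt_div_iff₀ hrQ]
    constructor
    · rintro ⟨h1, h2⟩
      have h1' : d + s < x * (r + a) := by exact_mod_cast h1
      have h2' : x * r < d := by exact_mod_cast h2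
      constructor
      · by_contra hx
        push_neg at hx
        have hx' : x ≤ q - 1 := by omega
        nlinarith [mul_le_mul_of_nonneg_right hx' (le_of_lt hra)]
      · by_contra hx
        push_neg at hx
        nlinarith [mul_le_mul_of_nonneg_right hx (le_of_lt hr0)]
    · rintro ⟨h1, h2⟩
      have h2' : x ≤ q + t - 2 := by omega
      constructor
      · have : d + s < x * (r + a) := by
          nlinarith [mul_le_mul_of_nonneg_right h1 (le_of_lt hra)]
        exact_mod_cast this
      · have : x * r < d := by
          nlinarith [mul_le_mul_of_nonneg_right h2' (le_of_lt hr0)]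
        exact_mod_cast this
  rw [key, Set.ncard_coe_finset, Int.card_Ico]
  congr 1
  ring
end

section
/- Let r ≥ 2 be even, a ≥ 1 odd, t ≥ 1, s ≥ 0 integers, and let c be an integer with 0 ≤ c ≤ a-1 such that a divides tr+s+c. Setting d = (r/a)*(tr+s+c) + (t-1)*r - 1, the number of integers x satisfying (d+s)/(r+a) < x ≤ d/r is exactly t - 1. -/
theorem stmt_6 (r a t s c : ℤ) (hr : 2 ≤ r) (hre : Even r) (ha : 1 ≤ a) (hao : Odd a)
    (ht : 1 ≤ t) (hs : 0 ≤ s) (hc1 : 0 ≤ c) (hc2 : c ≤ a - 1)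
    (hdvd : a ∣ t * r + s + c)
    (d : ℤ) (hd : d = r * ((t * r + s + c) / a) + (t - 1) * r - 1) :
    {x : ℤ | ((d + s : ℤ) : ℚ) / ((r + a : ℤ) : ℚ) < (x : ℚ) ∧
      (x : ℚ) ≤ ((d : ℤ) : ℚ) / (r : ℚ)}.ncard = (t - 1).toNat := by
  obtain ⟨k, hk⟩ := hdvd
  have ha0 : a ≠ 0 := by omega
  have hkdiv : (t * r + s + c) / a = k := by
    rw [hk]; exact Int.mul_ediv_cancel_left _ ha0
  rw [hkdiv] at hd
  have hra : (0:ℚ) < ((r + a : ℤ) : ℚ) := by exact_mod_cast (by omega : (0:ℤ) < r + a)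
  have hrq : (0:ℚ) < ((r : ℤ) : ℚ) := by exact_mod_cast (by omega : (0:ℤ) < r)
  have hset : {x : ℤ | ((d + s : ℤ) : ℚ) / ((r + a : ℤ) : ℚ) < (x : ℚ) ∧
      (x : ℚ) ≤ ((d : ℤ) : ℚ) / (r : ℚ)} = Set.Icc k (k + t - 2) := by
    ext x
    simp only [Set.mem_setOf_eq, Set.mem_Icc]
    rw [div_lt_iff₀ hra, le_div_iff₀ hrq]
    constructor
    · rintro ⟨h1, h2⟩
      have h1' : (d + s : ℤ) < x * (r + a) := by exact_mod_cast h1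
      have h2' : x * r ≤ d := by exact_mod_cast h2
      constructor
      · by_contra h
        push_neg at h
        have hx : x ≤ k - 1 := by omega
        nlinarith [mul_le_mul_of_nonneg_right hx (by omega : (0:ℤ) ≤ r + a)]
      · by_contra h
        push_neg at h
        have hx : k + t - 1 ≤ x := by omega
        nlinarith [mul_le_mul_of_nonneg_right hx (by omega : (0:ℤ) ≤ r)]
    · rintro ⟨h1, h2⟩
      have h1' : (d + s : ℤ) < x * (r + a) := by
        nlinarith [mul_le_mul_of_nonneg_right h1 (by omega : (0:ℤ) ≤ r + a)]
      have h2' : x * r ≤ d := by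
        nlinarith [mul_le_mul_of_nonneg_right h2 (by omega : (0:ℤ) ≤ r)]
      exact ⟨by exact_mod_cast h1', by exact_mod_cast h2'⟩
  rw [hset, ← Finset.coe_Icc, Set.ncard_coe_finset, Int.card_Icc]
  congr 1
  omega
end

section
/- Let r ≥ 2 be even, a ≥ 1 odd, t ≥ 1, s ≥ 0 integers, and let c be an integer with 0 ≤ c ≤ a-1 such that a divides tr+s+c. For every integer k ≥ 0, setting d = (r/a)*(tr+s+c) + (t-1)*r + k, there exist at least t distinct integers x with (d+s)/(r+a) < x ≤ d/r. -/
theorem stmt_7 (r a t s c k : ℤ) (hr : 2 ≤ r) (hre : Even r) (ha : 1 ≤ a) (hao : Odd a)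
    (ht : 1 ≤ t) (hs : 0 ≤ s) (hc1 : 0 ≤ c) (hc2 : c ≤ a - 1)
    (hdvd : a ∣ t * r + s + c) (hk : 0 ≤ k)
    (d : ℤ) (hd : d = r * ((t * r + s + c) / a) + (t - 1) * r + k) :
    ∃ S : Finset ℤ, t ≤ (S.card : ℤ) ∧
      ∀ x ∈ S, ((d + s : ℤ) : ℚ) / ((r + a : ℤ) : ℚ) < (x : ℚ) ∧
        (x : ℚ) ≤ ((d : ℤ) : ℚ) / (r : ℚ) := by
  have hr0 : (0:ℤ) < r := by linarith
  have hra0 : (0:ℤ) < r + a := by linarith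
  set m : ℤ := (t * r + s + c) / a with hm
  have ham : a * m = t * r + s + c := Int.mul_ediv_cancel' hdvd
  set p : ℤ := (d + s) / (r + a) with hp
  set q : ℤ := d / r with hq
  have hqv : q = k / r + (m + t - 1) := by
    have hdk : d = k + r * (m + t - 1) := by rw [hd]; ring
    rw [hq, hdk, Int.add_mul_ediv_left _ _ (by linarith : r ≠ 0)]
  have hpv : p = (k - r - c) / (r + a) + m := by
    have hds : d + s = (k - r - c) + (r + a) * m := by rw [hd]; linarith [ham]
    rw [hp, hds, Int.add_mul_ediv_left _ _ (by linarith : r + a ≠ 0)]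
  have hkey : (k - r - c) / (r + a) ≤ k / r - 1 := by
    have hkr : (k - r) / r = k / r - 1 := by
      have h1 : k - r = k + r * (-1) := by ring
      rw [h1, Int.add_mul_ediv_left _ _ (by linarith : r ≠ 0)]; ring
    rw [← hkr]
    set L : ℤ := (k - r) / r with hL
    have hL1 : -1 ≤ L := by
      have h2 : (-r) / r ≤ L := Int.ediv_le_ediv hr0 (by linarith : -r ≤ k - r)
      have h3 : (-r) / r = -1 := by
        have : -r = r * (-1) := by ring
        rw [this, Int.mul_ediv_cancel_left _ (by linarith : r ≠ 0)]
      linarith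
    have hlt : k - r < (L + 1) * r := by
      have := Int.lt_ediv_add_one_mul_self (k - r) hr0
      rw [← hL] at this; exact this
    rw [show L = (L + 1) - 1 from by ring]
    have : (k - r - c) / (r + a) < L + 1 := by
      rw [Int.ediv_lt_iff_lt_mul hra0]
      have hLa : 0 ≤ (L + 1) * a := mul_nonneg (by linarith) (by linarith)
      nlinarith
    omega
  have hcard : t ≤ q - p := by
    have hkr0 : k / r ≥ 0 := Int.ediv_nonneg hk (le_of_lt hr0)
    omega
  refine ⟨Finset.Ioc p q, ?_, ?_⟩
  · rw [Int.card_Ioc]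
    rw [Int.toNat_of_nonneg (by linarith)]
    linarith
  · intro x hx
    rw [Finset.mem_Ioc] at hx
    obtain ⟨hx1, hx2⟩ := hx
    constructor
    · rw [div_lt_iff₀ (by exact_mod_cast hra0 : (0:ℚ) < ((r + a : ℤ) : ℚ))]
      have : d + s < x * (r + a) := by
        rw [← Int.ediv_lt_iff_lt_mul hra0]; exact hx1
      exact_mod_cast this
    · rw [le_div_iff₀ (by exact_mod_cast hr0 : (0:ℚ) < (r : ℚ))]
      have : x * r ≤ d := by
        rw [← Int.le_ediv_iff_mul_le hr0]; exact hx2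
      exact_mod_cast this
end

section
/- Let r ≥ 1 and a ≥ 1 be odd integers, t ≥ 1, s ≥ 0, and let c be an integer with 0 ≤ c ≤ a-1 such that a divides tr+s+c. Setting d = (r/a)*(tr+s+c) + (t-1)*r, the number of integers x satisfying (d+s)/(r+a) ≤ x < d/r is exactly t - 1. -/
theorem stmt_8 (r a t s c : ℤ) (hr : 1 ≤ r) (hro : Odd r) (ha : 1 ≤ a) (hao : Odd a)
    (ht : 1 ≤ t) (hs : 0 ≤ s) (hc1 : 0 ≤ c) (hc2 : c ≤ a - 1)
    (hdvd : a ∣ t * r + s + c)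
    (d : ℤ) (hd : d = r * ((t * r + s + c) / a) + (t - 1) * r) :
    {x : ℤ | ((d + s : ℤ) : ℚ) / ((r + a : ℤ) : ℚ) ≤ (x : ℚ) ∧
      (x : ℚ) < ((d : ℤ) : ℚ) / (r : ℚ)}.ncard = (t - 1).toNat := by
  obtain ⟨k, hk⟩ := hdvd
  have hk' : (t * r + s + c) / a = k := by
    rw [hk]; exact Int.mul_ediv_cancel_left _ (by omega)
  rw [hk'] at hd
  have hra : (0:ℤ) < r + a := by omega
  have hset : {x : ℤ | ((d + s : ℤ) : ℚ) / ((r + a : ℤ) : ℚ) ≤ (x : ℚ) ∧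
      (x : ℚ) < ((d : ℤ) : ℚ) / (r : ℚ)} = Set.Ico k (k + (t - 1)) := by
    ext x
    simp only [Set.mem_setOf_eq, Set.mem_Ico]
    have h1 : ((d + s : ℤ) : ℚ) / ((r + a : ℤ) : ℚ) ≤ (x : ℚ) ↔
        (d + s : ℤ) ≤ x * (r + a) := by
      rw [div_le_iff₀ (by exact_mod_cast hra)]
      push_cast
      exact_mod_cast Iff.rfl
    have h2 : (x : ℚ) * (r : ℚ) < ((d : ℤ) : ℚ) ↔ x * r < (d : ℤ) := by
      exact_mod_cast Iff.rfl
    rw [h1, lt_div_iff₀ (by exact_mod_cast hr : (0:ℚ) < (r:ℚ)), h2]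
    constructor
    · rintro ⟨hle, hlt⟩
      constructor
      · by_contra h
        push_neg at h
        have hx : x ≤ k - 1 := by omega
        have := mul_le_mul_of_nonneg_right hx (le_of_lt hra)
        nlinarith
      · have : x * r < (k + (t - 1)) * r := by nlinarith
        exact lt_of_mul_lt_mul_right this (by omega)
    · rintro ⟨hle, hlt⟩
      constructor
      · have := mul_le_mul_of_nonneg_right hle (le_of_lt hra)
        nlinarith
      · have hx : x ≤ k + (t - 1) - 1 := by omega
        nlinarith
  rw [hset]
  rw [show Set.Ico k (k + (t - 1)) = ↑(Finset.Ico k (k + (t - 1))) by simp]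
  rw [Set.ncard_coe_finset, Int.card_Ico]
  congr 1
  omega
end

section
/- Let r ≥ 1 and a ≥ 1 be odd integers, t ≥ 1, s ≥ 0, and let c be an integer with 0 ≤ c ≤ a-1 such that a divides tr+s+c. For every integer k ≥ 1, setting d = (r/a)*(tr+s+c) + (t-1)*r + k, there exist at least t distinct integers x with (d+s)/(r+a) ≤ x < d/r. -/
theorem stmt_9 (r a t s c k : ℤ) (hr : 1 ≤ r) (hro : Odd r) (ha : 1 ≤ a) (hao : Odd a)
    (ht : 1 ≤ t) (hs : 0 ≤ s) (hc1 : 0 ≤ c) (hc2 : c ≤ a - 1)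
    (hdvd : a ∣ t * r + s + c) (hk : 1 ≤ k)
    (d : ℤ) (hd : d = r * ((t * r + s + c) / a) + (t - 1) * r + k) :
    ∃ S : Finset ℤ, t ≤ (S.card : ℤ) ∧
      ∀ x ∈ S, ((d + s : ℤ) : ℚ) / ((r + a : ℤ) : ℚ) ≤ (x : ℚ) ∧
        (x : ℚ) < ((d : ℤ) : ℚ) / (r : ℚ) := by
  set m : ℤ := (t * r + s + c) / a with hm
  have ham : a * m = t * r + s + c := Int.mul_ediv_cancel' hdvd
  have hra : (0:ℤ) < r + a := by linarith
  have hraQ : (0:ℚ) < ((r + a : ℤ) : ℚ) := by exact_mod_cast hra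
  have hrQ : (0:ℚ) < ((r : ℤ) : ℚ) := by exact_mod_cast (by linarith : (0:ℤ) < r)
  have card_Ico : ∀ L : ℤ, t ≤ (((Finset.Ico L (L + t)).card : ℤ)) := by
    intro L
    rw [Int.card_Ico]
    simp [Int.toNat_of_nonneg (by linarith : (0:ℤ) ≤ L + t - L)]
  rcases le_or_gt k r with hkr | hkr
  · -- case k ≤ r : use [m, m+t)
    refine ⟨Finset.Ico m (m + t), card_Ico m, ?_⟩
    intro x hx
    rw [Finset.mem_Ico] at hx
    obtain ⟨hx1, hx2⟩ := hx
    constructor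
    · rw [div_le_iff₀ hraQ]
      have h := mul_le_mul_of_nonneg_left hx1 (le_of_lt hra)
      have hint : d + s ≤ x * (r + a) := by nlinarith [h, ham, hd]
      exact_mod_cast hint
    · rw [lt_div_iff₀ hrQ]
      have h := mul_le_mul_of_nonneg_right (show x ≤ m + t - 1 by linarith)
        (show (0:ℤ) ≤ r by linarith)
      have hint : x * r < d := by nlinarith [h, hd]
      exact_mod_cast hint
  · -- case k > r : use [L, L+t) with L = ceil((d+s)/(r+a))
    set L : ℤ := -((-(d + s)) / (r + a)) with hL
    have he := Int.mul_ediv_add_emod (-(d + s)) (r + a)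
    have hm1 : 0 ≤ (-(d + s)) % (r + a) := Int.emod_nonneg _ (ne_of_gt hra)
    have hm2 : (-(d + s)) % (r + a) < r + a := Int.emod_lt_of_pos _ hra
    have hLlow : d + s ≤ (r + a) * L := by
      simp only [hL, mul_neg]; linarith
    have hLhigh : (r + a) * L < d + s + (r + a) := by
      simp only [hL, mul_neg]; linarith
    refine ⟨Finset.Ico L (L + t), card_Ico L, ?_⟩
    intro x hx
    rw [Finset.mem_Ico] at hx
    obtain ⟨hx1, hx2⟩ := hx
    constructor
    · rw [div_le_iff₀ hraQ]
      have h := mul_le_mul_of_nonneg_left hx1 (le_of_lt hra)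
      have hint : d + s ≤ x * (r + a) := by nlinarith [h, hLlow]
      exact_mod_cast hint
    · rw [lt_div_iff₀ hrQ]
      have had : a * d = r * (t * r + s + c) + a * ((t - 1) * r) + a * k := by
        rw [hd]; linear_combination r * ham
      have hak : a * r + a ≤ a * k := by
        have := mul_le_mul_of_nonneg_left (show r + 1 ≤ k by linarith)
          (show (0:ℤ) ≤ a by linarith)
        linarith
      have hA := mul_le_mul_of_nonneg_left (show x ≤ L + t - 1 by linarith)
        (show (0:ℤ) ≤ r * (r + a) from mul_nonneg (by linarith) (by linarith))
      have hB := mul_lt_mul_of_pos_left hLhigh (show (0:ℤ) < r by linarith)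
      have hrc : 0 ≤ r * c := mul_nonneg (by linarith) hc1
      have key : (r + a) * (x * r) < (r + a) * d := by nlinarith [hA, hB, had, hak, hrc]
      have hint : x * r < d := lt_of_mul_lt_mul_left key (le_of_lt hra)
      exact_mod_cast hint
end

section
/- Let r ≥ 1 be odd, a ≥ 1 odd, t ≥ 1, s ≥ 0, and suppose a divides tr + s. Setting d = (r/a)*(tr+s) + t*r, i.e. d = r*⌈(tr+s)/a⌉ + (t-1)*r + r (with c = a), there are exactly t integers x with (d+s)/(r+a) ≤ x < d/r, namely x = (tr+s)/a + i for i = 0, 1, ..., t-1. -/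
theorem stmt_10 (r a t s : ℤ) (hr : 1 ≤ r) (hro : Odd r) (ha : 1 ≤ a) (hao : Odd a)
    (ht : 1 ≤ t) (hs : 0 ≤ s) (hdvd : a ∣ t * r + s)
    (d : ℤ) (hd : d = r * ((t * r + s) / a) + t * r) :
    {x : ℤ | ((d + s : ℤ) : ℚ) / ((r + a : ℤ) : ℚ) ≤ (x : ℚ) ∧
        (x : ℚ) < ((d : ℤ) : ℚ) / (r : ℚ)}
      = {x : ℤ | ∃ i : ℤ, 0 ≤ i ∧ i ≤ t - 1 ∧ x = (t * r + s) / a + i} ∧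
    {x : ℤ | ((d + s : ℤ) : ℚ) / ((r + a : ℤ) : ℚ) ≤ (x : ℚ) ∧
        (x : ℚ) < ((d : ℤ) : ℚ) / (r : ℚ)}.ncard = t.toNat := by
  obtain ⟨q, hq⟩ := hdvd
  have hq' : (t * r + s) / a = q := by
    rw [hq]; exact Int.mul_ediv_cancel_left q (by omega)
  rw [hq'] at hd
  have hds : d + s = q * (r + a) := by rw [hd]; linear_combination hq
  have hdr : d = (q + t) * r := by rw [hd]; ring
  have hseq : {x : ℤ | ((d + s : ℤ) : ℚ) / ((r + a : ℤ) : ℚ) ≤ (x : ℚ) ∧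
      (x : ℚ) < ((d : ℤ) : ℚ) / (r : ℚ)} = Set.Ico q (q + t) := by
    ext x
    simp only [Set.mem_setOf_eq, Set.mem_Ico]
    have h1 : (0:ℚ) < ((r + a : ℤ) : ℚ) := by exact_mod_cast (by omega : (0:ℤ) < r + a)
    have h2 : (0:ℚ) < ((r : ℤ) : ℚ) := by exact_mod_cast (by omega : (0:ℤ) < r)
    rw [div_le_iff₀ h1, lt_div_iff₀ h2]
    constructor
    · rintro ⟨ha1, ha2⟩
      have ha1' : (d + s : ℤ) ≤ x * (r + a) := by exact_mod_cast ha1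
      have ha2' : (x : ℤ) * r < d := by exact_mod_cast ha2
      rw [hds] at ha1'
      rw [hdr] at ha2'
      constructor
      · exact le_of_mul_le_mul_right ha1' (by omega)
      · exact lt_of_mul_lt_mul_right ha2' (by omega)
    · rintro ⟨hb1, hb2⟩
      have ha1' : (d + s : ℤ) ≤ x * (r + a) := by
        rw [hds]; exact mul_le_mul_of_nonneg_right hb1 (by omega)
      have ha2' : (x : ℤ) * r < d := by
        rw [hdr]; exact mul_lt_mul_of_pos_right hb2 (by omega)
      exact ⟨by exact_mod_cast ha1', by exact_mod_cast ha2'⟩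
  constructor
  · rw [hseq, hq']
    ext x
    simp only [Set.mem_Ico, Set.mem_setOf_eq]
    constructor
    · intro h; exact ⟨x - q, by omega, by omega, by omega⟩
    · rintro ⟨i, h1, h2, h3⟩; omega
  · rw [hseq, ← Finset.coe_Ico, Set.ncard_coe_finset, Int.card_Ico]
    congr 1
    omega
end

section
/- Let d, r, a be positive integers with r odd and a even, and s a nonnegative integer. If every vertex degree of a graph G lies in {d,...,d+s} and G is a (d,d+s)-simple graph that admits an (r,r+a)-factorization into x factors where x is an integer with x = d/r (so r divides d and x ≥ 1), then there exists a simple d-regular graph H with no (r,r+a)-factorization into x factors, provided x ≥ 2. Concretely: if r is odd and d = x*r with x ≥ 2, then there exists a simple d-regular graph with no decomposition into x spanning subgraphs each with all degrees in {r,...,r+a}. -/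
open Finset

lemma deg_parity {V : Type} [Fintype V] [DecidableEq V] (F : SimpleGraph V)
    [DecidableRel F.Adj] (S : Finset V) :
    ((∑ v ∈ S, F.degree v : ℕ) : ZMod 2)
      = ((∑ v ∈ S, ∑ w ∈ Sᶜ, (if F.Adj v w then 1 else 0) : ℕ) : ZMod 2) := by
  have hdeg : ∀ v, F.degree v = ∑ w ∈ S, (if F.Adj v w then 1 else 0)
      + ∑ w ∈ Sᶜ, (if F.Adj v w then 1 else 0) := by
    intro v
    rw [Finset.sum_add_sum_compl]
    rw [SimpleGraph.degree, SimpleGraph.neighborFinset_eq_filter, Finset.card_filter]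
  simp only [hdeg, Finset.sum_add_distrib, Nat.cast_add]
  have h0 : ((∑ v ∈ S, ∑ w ∈ S, (if F.Adj v w then 1 else 0) : ℕ) : ZMod 2) = 0 := by
    rw [← Finset.sum_product']
    push_cast
    refine Finset.sum_involution (fun a _ => Prod.swap a) ?_ ?_ ?_ ?_
    · intro a _
      by_cases h : F.Adj a.1 a.2
      · simp [h, h.symm]
        decide
      · have h' : ¬ F.Adj a.2 a.1 := fun hh => h hh.symm
        simp [h, h']
    · intro a _ ha
      have hadj : F.Adj a.1 a.2 := by by_contra h; simp [h] at ha
      intro h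
      have h1 : a.2 = a.1 := congrArg Prod.fst h
      exact hadj.ne h1.symm
    · intro a ha
      simp only [Finset.mem_product] at ha ⊢
      exact ⟨ha.2, ha.1⟩
    · intro a _; rfl
  rw [h0, zero_add]


lemma ind_decomp {V : Type} (H : SimpleGraph V) {x : ℕ} (F : Fin x → SimpleGraph V)
    [DecidableRel H.Adj] [∀ i, DecidableRel (F i).Adj]
    (hdisj : ∀ i j, i ≠ j → Disjoint (F i).edgeSet (F j).edgeSet)
    (hunion : (⋃ i, (F i).edgeSet) = H.edgeSet) (v w : V) :
    (if H.Adj v w then 1 else 0 : ℕ) = ∑ i, if (F i).Adj v w then 1 else 0 := by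
  by_cases h : H.Adj v w
  · have : s(v, w) ∈ ⋃ i, (F i).edgeSet := by rw [hunion]; exact h
    obtain ⟨i, hi⟩ := Set.mem_iUnion.mp this
    rw [if_pos h, Finset.sum_eq_single_of_mem i (Finset.mem_univ i)]
    · rw [SimpleGraph.mem_edgeSet] at hi
      rw [if_pos hi]
    · intro j _ hj
      rw [if_neg]
      intro hadj
      exact (Set.disjoint_left.mp (hdisj j i hj) hadj) hi
  · rw [if_neg h]
    symm
    apply Finset.sum_eq_zero
    intro i _
    rw [if_neg]
    intro hadj
    apply h
    have : s(v, w) ∈ ⋃ i, (F i).edgeSet := Set.mem_iUnion.mpr ⟨i, hadj⟩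
    rw [hunion] at this
    exact this

lemma deg_decomp {V : Type} [Fintype V] [DecidableEq V] (H : SimpleGraph V)
    {x : ℕ} (F : Fin x → SimpleGraph V)
    [DecidableRel H.Adj] [∀ i, DecidableRel (F i).Adj]
    (hdisj : ∀ i j, i ≠ j → Disjoint (F i).edgeSet (F j).edgeSet)
    (hunion : (⋃ i, (F i).edgeSet) = H.edgeSet) (v : V) :
    H.degree v = ∑ i, (F i).degree v := by
  have hd : ∀ (G : SimpleGraph V) [DecidableRel G.Adj],
      G.degree v = ∑ w, (if G.Adj v w then 1 else 0 : ℕ) := by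
    intro G inst
    rw [SimpleGraph.degree, SimpleGraph.neighborFinset_eq_filter, Finset.card_filter]
  rw [hd H]
  simp only [fun i => hd (F i)]
  rw [Finset.sum_comm]
  exact Finset.sum_congr rfl fun w _ => ind_decomp H F hdisj hunion v w

lemma all_eq_of_sum {x r : ℕ} (f : Fin x → ℕ) (hsum : ∑ i, f i = x * r)
    (hge : ∀ i, r ≤ f i) (i : Fin x) : f i = r := by
  by_contra h
  have : r < f i := lt_of_le_of_ne (hge i) (Ne.symm h)
  have hlt : ∑ _j : Fin x, r < ∑ j, f j :=
    Finset.sum_lt_sum (fun j _ => hge j) ⟨i, Finset.mem_univ i, this⟩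
  simp [hsum, mul_comm] at hlt

lemma core {V : Type} [Fintype V] [DecidableEq V] (H : SimpleGraph V) [DecidableRel H.Adj]
    {x r d : ℕ} (hro : Odd r) (hdx : d = x * r)
    (hreg : ∀ v, H.degree v = d)
    (F : Fin x → SimpleGraph V) [∀ i, DecidableRel (F i).Adj]
    (hdisj : ∀ i j, i ≠ j → Disjoint (F i).edgeSet (F j).edgeSet)
    (hunion : (⋃ i, (F i).edgeSet) = H.edgeSet)
    (hdeg : ∀ i v, r ≤ (F i).degree v)
    (S : Finset V) (hS : Odd S.card)
    (hcross : ∑ v ∈ S, ∑ w ∈ Sᶜ, (if H.Adj v w then 1 else 0 : ℕ) < x) : False := by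
  have hFr : ∀ i v, (F i).degree v = r := by
    intro i v
    exact all_eq_of_sum (fun j => (F j).degree v)
      (by rw [← deg_decomp H F hdisj hunion v, hreg, hdx]) (fun j => hdeg j v) i
  -- each factor has at least one cross edge
  have hone : ∀ i : Fin x, 1 ≤ ∑ v ∈ S, ∑ w ∈ Sᶜ, (if (F i).Adj v w then 1 else 0 : ℕ) := by
    intro i
    rcases Nat.eq_zero_or_pos (∑ v ∈ S, ∑ w ∈ Sᶜ, (if (F i).Adj v w then 1 else 0 : ℕ))
      with h0 | h1
    · exfalso
      have hp := deg_parity (F i) S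
      rw [h0] at hp
      simp only [hFr, Finset.sum_const, smul_eq_mul, Nat.cast_zero] at hp
      have hodd : Odd (S.card * r) := hS.mul hro
      rw [Nat.odd_iff] at hodd
      rw [← ZMod.natCast_mod, hodd] at hp
      simp at hp
    · exact h1
  -- total cross edges of H equal sum over factors
  have htot : ∑ v ∈ S, ∑ w ∈ Sᶜ, (if H.Adj v w then 1 else 0 : ℕ)
      = ∑ i, ∑ v ∈ S, ∑ w ∈ Sᶜ, (if (F i).Adj v w then 1 else 0 : ℕ) := by
    calc ∑ v ∈ S, ∑ w ∈ Sᶜ, (if H.Adj v w then 1 else 0 : ℕ)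
        = ∑ v ∈ S, ∑ w ∈ Sᶜ, ∑ i, (if (F i).Adj v w then 1 else 0 : ℕ) :=
          Finset.sum_congr rfl fun v _ => Finset.sum_congr rfl fun w _ =>
            ind_decomp H F hdisj hunion v w
      _ = ∑ v ∈ S, ∑ i, ∑ w ∈ Sᶜ, (if (F i).Adj v w then 1 else 0 : ℕ) :=
          Finset.sum_congr rfl fun v _ => Finset.sum_comm
      _ = _ := Finset.sum_comm
  have : (x : ℕ) ≤ ∑ v ∈ S, ∑ w ∈ Sᶜ, (if H.Adj v w then 1 else 0 : ℕ) := by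
    rw [htot]
    calc (x : ℕ) = ∑ _i : Fin x, 1 := by simp
    _ ≤ _ := Finset.sum_le_sum fun i _ => hone i
  omega

lemma ncard_nbr {V : Type} [Fintype V] (G : SimpleGraph V) [DecidableRel G.Adj] (v : V) :
    (G.neighborSet v).ncard = G.degree v := by
  simp [SimpleGraph.degree, SimpleGraph.neighborFinset_def, Set.ncard_eq_toFinset_card']

def grel (d : ℕ) (i j : Fin (d + 2)) : Prop :=
  (i.val = 0 ∧ (j.val = 1 ∨ j.val = 2)) ∨ (i.val % 2 = 1 ∧ 3 ≤ i.val ∧ j.val = i.val + 1)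

instance (d : ℕ) : DecidableRel (grel d) := fun i j => by unfold grel; infer_instance

def HH (d : ℕ) : SimpleGraph (Bool × Fin (d + 2)) :=
  SimpleGraph.fromRel (fun p q =>
    (p.1 = q.1 ∧ ¬(grel d p.2 q.2 ∨ grel d q.2 p.2)) ∨
    (p.1 ≠ q.1 ∧ p.2.val = 0 ∧ q.2.val = 0))

instance (d : ℕ) : DecidableRel (HH d).Adj := fun p q =>
  decidable_of_iff _ (SimpleGraph.fromRel_adj _ p q).symm

lemma grel_card (d : ℕ) (hd3 : 3 ≤ d) (hdo : d % 2 = 1) (i : Fin (d + 2)) :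
    (univ.filter (fun j => i = j ∨ grel d i j ∨ grel d j i)).card
      = if i.val = 0 then 3 else 2 := by
  have hi2 := i.isLt
  have hv : i.val = 0 ∨ i.val = 1 ∨ i.val = 2 ∨ (3 ≤ i.val ∧ i.val % 2 = 1)
      ∨ (4 ≤ i.val ∧ i.val % 2 = 0) := by omega
  rcases hv with h | h | h | ⟨h3, hp⟩ | ⟨h4, hp⟩
  · have he : (univ.filter (fun j => i = j ∨ grel d i j ∨ grel d j i))
        = ({i, ⟨1, by omega⟩, ⟨2, by omega⟩} : Finset (Fin (d + 2))) := by
      ext j; simp [grel, Fin.ext_iff, h, -Fin.val_eq_zero_iff]; omega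
    rw [he, if_pos h]
    rw [Finset.card_insert_of_notMem (by simp [Fin.ext_iff, h]),
      Finset.card_insert_of_notMem (by simp [Fin.ext_iff]), Finset.card_singleton]
  · have he : (univ.filter (fun j => i = j ∨ grel d i j ∨ grel d j i))
        = ({i, ⟨0, by omega⟩} : Finset (Fin (d + 2))) := by
      ext j; simp [grel, Fin.ext_iff, h, -Fin.val_eq_zero_iff]; omega
    rw [he, if_neg (by omega), Finset.card_pair (by simp [Fin.ext_iff, h])]
  · have he : (univ.filter (fun j => i = j ∨ grel d i j ∨ grel d j i))
        = ({i, ⟨0, by omega⟩} : Finset (Fin (d + 2))) := by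
      ext j; simp [grel, Fin.ext_iff, h, -Fin.val_eq_zero_iff]; omega
    rw [he, if_neg (by omega), Finset.card_pair (by simp [Fin.ext_iff, h])]
  · have he : (univ.filter (fun j => i = j ∨ grel d i j ∨ grel d j i))
        = ({i, ⟨i.val + 1, by omega⟩} : Finset (Fin (d + 2))) := by
      ext j; simp [grel, Fin.ext_iff, -Fin.val_eq_zero_iff]; omega
    rw [he, if_neg (by omega), Finset.card_pair (by simp [Fin.ext_iff])]
  · have he : (univ.filter (fun j => i = j ∨ grel d i j ∨ grel d j i))
        = ({i, ⟨i.val - 1, by omega⟩} : Finset (Fin (d + 2))) := by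
      ext j; simp [grel, Fin.ext_iff, -Fin.val_eq_zero_iff]; omega
    rw [he, if_neg (by omega), Finset.card_pair (by simp [Fin.ext_iff]; omega)]

lemma HH_adj_same (d : ℕ) (s : Bool) (i j : Fin (d + 2)) :
    (HH d).Adj (s, i) (s, j) ↔ ¬(i = j ∨ grel d i j ∨ grel d j i) := by
  rw [HH, SimpleGraph.fromRel_adj]
  simp only [Prod.mk.injEq, ne_eq, not_true_eq_false, false_and, true_and, true_and]
  tauto

lemma HH_adj_cross (d : ℕ) (s t : Bool) (hst : s ≠ t) (i j : Fin (d + 2)) :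
    (HH d).Adj (s, i) (t, j) ↔ (i.val = 0 ∧ j.val = 0) := by
  rw [HH, SimpleGraph.fromRel_adj]
  constructor
  · rintro ⟨hne, (⟨h, -⟩ | ⟨-, h1, h2⟩) | (⟨h, -⟩ | ⟨-, h1, h2⟩)⟩
    · exact absurd h hst
    · exact ⟨h1, h2⟩
    · exact absurd h.symm hst
    · exact ⟨h2, h1⟩
  · rintro ⟨h1, h2⟩
    exact ⟨by simp [Prod.ext_iff, hst], Or.inl (Or.inr ⟨hst, h1, h2⟩)⟩

lemma sum_same (d : ℕ) (s : Bool) (i : Fin (d + 2)) :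
    (∑ j, if (HH d).Adj (s, i) (s, j) then 1 else 0 : ℕ)
      = (d + 2) - (univ.filter (fun j => i = j ∨ grel d i j ∨ grel d j i)).card := by
  have h1 : (∑ j, if (HH d).Adj (s, i) (s, j) then 1 else 0 : ℕ)
      = (univ.filter (fun j => ¬(i = j ∨ grel d i j ∨ grel d j i))).card := by
    rw [Finset.card_filter]
    exact Finset.sum_congr rfl fun j _ => by
      by_cases h : (HH d).Adj (s, i) (s, j)
      · rw [if_pos h, if_pos ((HH_adj_same d s i j).mp h)]
      · rw [if_neg h, if_neg (fun hh => h ((HH_adj_same d s i j).mpr hh))]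
  rw [h1]
  have := Finset.card_filter_add_card_filter_not
    (s := (univ : Finset (Fin (d + 2)))) (p := fun j => i = j ∨ grel d i j ∨ grel d j i)
  simp only [Finset.card_univ, Fintype.card_fin] at this
  omega

lemma sum_cross (d : ℕ) (s t : Bool) (hst : s ≠ t) (i : Fin (d + 2)) :
    (∑ j, if (HH d).Adj (s, i) (t, j) then 1 else 0 : ℕ) = if i.val = 0 then 1 else 0 := by
  have h1 : ∀ j : Fin (d + 2), (if (HH d).Adj (s, i) (t, j) then 1 else 0 : ℕ)
      = if (i.val = 0 ∧ j.val = 0) then 1 else 0 := by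
    intro j
    by_cases h : (HH d).Adj (s, i) (t, j)
    · rw [if_pos h, if_pos ((HH_adj_cross d s t hst i j).mp h)]
    · rw [if_neg h, if_neg (fun hh => h ((HH_adj_cross d s t hst i j).mpr hh))]
  simp only [h1]
  by_cases hi : i.val = 0
  · simp only [hi, true_and, if_pos]
    rw [← Finset.card_filter]
    have : (univ.filter (fun j : Fin (d + 2) => j.val = 0)) = {⟨0, by omega⟩} := by
      ext j; simp [Fin.ext_iff, -Fin.val_eq_zero_iff]
    simp [this, -Fin.val_eq_zero_iff]
  · simp [hi]

lemma HH_degree (d : ℕ) (hd3 : 3 ≤ d) (hdo : d % 2 = 1) (p : Bool × Fin (d + 2)) :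
    (HH d).degree p = d := by
  obtain ⟨s, i⟩ := p
  rw [SimpleGraph.degree, SimpleGraph.neighborFinset_eq_filter, Finset.card_filter,
    Fintype.sum_prod_type, Fintype.sum_bool]
  cases s
  · rw [sum_cross d false true (by simp) i, sum_same d false i, grel_card d hd3 hdo i]
    by_cases hi : i.val = 0 <;> simp [hi] <;> omega
  · rw [sum_cross d true false (by simp) i, sum_same d true i, grel_card d hd3 hdo i]
    by_cases hi : i.val = 0 <;> simp [hi] <;> omega
/-- if `r` is odd, `a` is even and positive, and `d = x * r` with `x ≥ 2`,
then there is a simple `d`-regular graph admitting no decomposition into `x` spanning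
subgraphs all of whose degrees lie in `{r, ..., r+a}`. -/
theorem stmt_11 (d r a x : ℕ) (hd : 1 ≤ d) (hr : 1 ≤ r) (hro : Odd r)
    (ha : 1 ≤ a) (hae : Even a) (hx : 2 ≤ x) (hdx : d = x * r) :
    ∃ (V : Type) (_ : Fintype V) (_ : Nonempty V) (H : SimpleGraph V),
      (∀ v : V, (H.neighborSet v).ncard = d) ∧
      ¬ ∃ F : Fin x → SimpleGraph V,
          (∀ i, F i ≤ H) ∧
          (∀ i j, i ≠ j → Disjoint (F i).edgeSet (F j).edgeSet) ∧
          (⋃ i, (F i).edgeSet) = H.edgeSet ∧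
          (∀ i, ∀ v : V, r ≤ ((F i).neighborSet v).ncard ∧
            ((F i).neighborSet v).ncard ≤ r + a) := by
  rcases Nat.even_or_odd d with hde | hdo
  · -- d even : take the complete graph on d+1 vertices
    refine ⟨Fin (d + 1), inferInstance, ⟨0⟩, ⊤, ?_, ?_⟩
    · intro v
      rw [ncard_nbr, SimpleGraph.complete_graph_degree]
      simp
    · rintro ⟨F, -, hdisj, hunion, hdeg⟩
      haveI : ∀ i, DecidableRel (F i).Adj := fun i => Classical.decRel _
      have hreg : ∀ v : Fin (d + 1), (⊤ : SimpleGraph (Fin (d + 1))).degree v = d := by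
        intro v; rw [SimpleGraph.complete_graph_degree]; simp
      refine core ⊤ hro hdx hreg F hdisj hunion (fun i v => ?_) univ ?_ ?_
      · have := (hdeg i v).1
        rwa [ncard_nbr] at this
      · rw [Finset.card_univ, Fintype.card_fin]
        rcases hde with ⟨k, hk⟩
        exact ⟨k, by omega⟩
      · have : (univ : Finset (Fin (d + 1)))ᶜ = ∅ := by simp
        rw [this]
        simp only [Finset.sum_empty, Finset.sum_const_zero]
        omega
  · -- d odd : bridge construction
    rw [Nat.odd_iff] at hdo
    have hxo : x % 2 = 1 := by
      rcases Nat.even_or_odd x with hxe | hxo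
      · exfalso
        rcases hxe with ⟨k, hk⟩
        have h2 : d = 2 * (k * r) := by rw [hdx, hk]; ring
        omega
      · exact Nat.odd_iff.mp hxo
    have hx3 : 3 ≤ x := by omega
    have hd3 : 3 ≤ d := by
      have : 3 * 1 ≤ x * r := Nat.mul_le_mul hx3 hr
      omega
    refine ⟨Bool × Fin (d + 2), inferInstance, ⟨(false, ⟨0, by omega⟩)⟩, HH d, ?_, ?_⟩
    · intro v
      rw [ncard_nbr, HH_degree d hd3 hdo]
    · rintro ⟨F, -, hdisj, hunion, hdeg⟩
      haveI : ∀ i, DecidableRel (F i).Adj := fun i => Classical.decRel _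
      refine core (HH d) hro hdx (HH_degree d hd3 hdo) F hdisj hunion (fun i v => ?_)
        (({false} : Finset Bool) ×ˢ univ) ?_ ?_
      · have := (hdeg i v).1
        rwa [ncard_nbr] at this
      · rw [Finset.card_product, Finset.card_singleton, Finset.card_univ, Fintype.card_fin]
        rw [Nat.odd_iff]; omega
      · have hSc : (({false} : Finset Bool) ×ˢ (univ : Finset (Fin (d + 2))))ᶜ
            = ({true} : Finset Bool) ×ˢ univ := by
          ext ⟨t, j⟩
          cases t <;> simp
        rw [hSc, Finset.sum_product]
        simp only [Finset.sum_singleton]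
        have hin : ∀ i : Fin (d + 2),
            (∑ q ∈ ({true} : Finset Bool) ×ˢ (univ : Finset (Fin (d + 2))),
              if (HH d).Adj (false, i) q then 1 else 0 : ℕ)
            = if i.val = 0 then 1 else 0 := by
          intro i
          rw [Finset.sum_product, Finset.sum_singleton]
          exact sum_cross d false true (by simp) i
        rw [Finset.sum_congr rfl fun i _ => hin i]
        have : (∑ i : Fin (d + 2), if i.val = 0 then 1 else 0 : ℕ) = 1 := by
          rw [← Finset.card_filter]
          have : (univ.filter (fun j : Fin (d + 2) => j.val = 0)) = {⟨0, by omega⟩} := by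
            ext j; simp [Fin.ext_iff, -Fin.val_eq_zero_iff]
          simp [this, -Fin.val_eq_zero_iff]
        rw [this]
        omega
end

section
/- Let x ≥ 2 be an even integer, r ≥ 2 even, a ≥ 1 odd. Suppose G is a graph with vertex sets M, N where |M| = x*r + 1, |N| = x*(r+a), every vertex of M has degree x*(r+a), every vertex of N has degree x*r, and |E(G)| = x²r² + x²ra + x(r+a)/2. Then G has no partition of its edge set into x spanning subgraphs each with all vertex degrees in {r,...,r+a}. -/
/-- the bidegreed boundary graph (`x` even, `r` even, `a` odd) has no
`(r, r+a)`-factorization into `x` factors. -/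
theorem stmt_14 (x r a : ℕ) (hx : 2 ≤ x) (hxe : Even x) (hr : 2 ≤ r) (hre : Even r)
    (ha : 1 ≤ a) (hao : Odd a)
    (V : Type*) [Fintype V] (G : SimpleGraph V) (M N : Set V)
    (hMN : Disjoint M N) (hunion : M ∪ N = Set.univ)
    (hM : M.ncard = x * r + 1) (hN : N.ncard = x * (r + a))
    (hdegM : ∀ v ∈ M, (G.neighborSet v).ncard = x * (r + a))
    (hdegN : ∀ v ∈ N, (G.neighborSet v).ncard = x * r)
    (hE : (G.edgeSet.ncard : ℚ)
      = (x : ℚ) ^ 2 * r ^ 2 + (x : ℚ) ^ 2 * r * a + (x : ℚ) * ((r : ℚ) + a) / 2) :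
    ¬ ∃ F : Fin x → SimpleGraph V,
        (∀ i, F i ≤ G) ∧
        (∀ i j, i ≠ j → Disjoint (F i).edgeSet (F j).edgeSet) ∧
        (⋃ i, (F i).edgeSet) = G.edgeSet ∧
        (∀ i, ∀ v : V, r ≤ ((F i).neighborSet v).ncard ∧
          ((F i).neighborSet v).ncard ≤ r + a) := by
  classical
  rintro ⟨F, hle, hdisj, hcover, hdeg⟩
  -- per-vertex degree sum
  have hsum : ∀ v : V, (G.neighborSet v).ncard
      = ∑ i : Fin x, ((F i).neighborSet v).ncard := by
    intro v
    have hU : G.neighborSet v = ⋃ i, (F i).neighborSet v := by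
      ext w
      simp only [SimpleGraph.mem_neighborSet, Set.mem_iUnion]
      constructor
      · intro h
        have h2 : s(v, w) ∈ G.edgeSet := h
        rw [← hcover] at h2
        simpa using h2
      · rintro ⟨i, hi⟩; exact hle i hi
    rw [hU, Set.ncard_eq_toFinset_card', Set.toFinset_iUnion, Finset.card_biUnion]
    · simp [Set.ncard_eq_toFinset_card']
    · intro i _ j _ hij
      have hd := hdisj i j hij
      simp only [Function.onFun]
      rw [Finset.disjoint_left]
      intro w hwi hwj
      rw [Set.mem_toFinset] at hwi hwj
      exact (Set.disjoint_left.mp hd ((F i).mem_edgeSet.mpr hwi)) ((F j).mem_edgeSet.mpr hwj)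
  have i0 : Fin x := ⟨0, by omega⟩
  -- degree of F i0 at v ∈ M is r + a
  have hdM : ∀ v ∈ M, ((F i0).neighborSet v).ncard = r + a := by
    intro v hv
    have h1 : ∑ i : Fin x, ((F i).neighborSet v).ncard = x * (r + a) := by
      rw [← hsum v, hdegM v hv]
    have h2 : ∑ i ∈ Finset.univ.erase i0, ((F i).neighborSet v).ncard
        ≤ (x - 1) * (r + a) := by
      have := Finset.sum_le_card_nsmul (Finset.univ.erase i0)
        (fun i => ((F i).neighborSet v).ncard) (r + a)
        (fun i _ => (hdeg i v).2)
      simpa [Finset.card_erase_of_mem, smul_eq_mul] using this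
    have h3 : ∑ i ∈ Finset.univ.erase i0, ((F i).neighborSet v).ncard
        + ((F i0).neighborSet v).ncard = x * (r + a) := by
      rw [Finset.sum_erase_add _ _ (Finset.mem_univ i0)]; exact h1
    have h4 : (x - 1) * (r + a) + (r + a) = x * (r + a) := by
      obtain ⟨y, rfl⟩ : ∃ y, x = y + 1 := ⟨x - 1, by omega⟩
      simp only [Nat.add_sub_cancel]; ring
    have h5 := (hdeg i0 v).2
    omega
  -- degree of F i0 at v ∈ N is r
  have hdN : ∀ v ∈ N, ((F i0).neighborSet v).ncard = r := by
    intro v hv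
    have h1 : ∑ i : Fin x, ((F i).neighborSet v).ncard = x * r := by
      rw [← hsum v, hdegN v hv]
    have h2 : (x - 1) * r
        ≤ ∑ i ∈ Finset.univ.erase i0, ((F i).neighborSet v).ncard := by
      have := Finset.card_nsmul_le_sum (Finset.univ.erase i0)
        (fun i => ((F i).neighborSet v).ncard) r
        (fun i _ => (hdeg i v).1)
      simpa [Finset.card_erase_of_mem, smul_eq_mul] using this
    have h3 : ∑ i ∈ Finset.univ.erase i0, ((F i).neighborSet v).ncard
        + ((F i0).neighborSet v).ncard = x * r := by
      rw [Finset.sum_erase_add _ _ (Finset.mem_univ i0)]; exact h1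
    have h4 : (x - 1) * r + r = x * r := by
      obtain ⟨y, rfl⟩ : ∃ y, x = y + 1 := ⟨x - 1, by omega⟩
      simp only [Nat.add_sub_cancel]; ring
    have h5 := (hdeg i0 v).1
    omega
  -- handshake: the degree sum of F i0 is even
  have heven : Even (∑ v : V, ((F i0).neighborSet v).ncard) := by
    have hhs := SimpleGraph.sum_degrees_eq_twice_card_edges (F i0)
    have hcongr : ∑ v : V, ((F i0).neighborSet v).ncard = ∑ v : V, (F i0).degree v := by
      refine Finset.sum_congr rfl fun v _ => ?_
      rw [SimpleGraph.degree, SimpleGraph.neighborFinset, Set.ncard_eq_toFinset_card']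
    rw [hcongr, hhs]
    exact even_two_mul _
  -- compute the degree sum
  have hsplit : ∑ v : V, ((F i0).neighborSet v).ncard
      = (x * r + 1) * (r + a) + x * (r + a) * r := by
    have hMf : M.toFinset ∪ N.toFinset = Finset.univ := by
      ext v
      simp only [Finset.mem_union, Set.mem_toFinset, Finset.mem_univ, iff_true]
      simpa using hunion.ge (Set.mem_univ v)
    have hdisjf : Disjoint M.toFinset N.toFinset := by
      rw [Set.disjoint_toFinset]; exact hMN
    rw [← hMf, Finset.sum_union hdisjf]
    have hM' : ∑ v ∈ M.toFinset, ((F i0).neighborSet v).ncard = (x * r + 1) * (r + a) := by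
      rw [Finset.sum_congr rfl (fun v hv => hdM v (Set.mem_toFinset.mp hv))]
      rw [Finset.sum_const, smul_eq_mul, ← Set.ncard_eq_toFinset_card', hM]
    have hN' : ∑ v ∈ N.toFinset, ((F i0).neighborSet v).ncard = x * (r + a) * r := by
      rw [Finset.sum_congr rfl (fun v hv => hdN v (Set.mem_toFinset.mp hv))]
      rw [Finset.sum_const, smul_eq_mul, ← Set.ncard_eq_toFinset_card', hN]
    rw [hM', hN']
  rw [hsplit] at heven
  -- parity contradiction
  have hodd : Odd ((x * r + 1) * (r + a) + x * (r + a) * r) := by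
    have h1 : Odd (x * r + 1) := Even.add_one (hxe.mul_right r)
    have h2 : Odd (r + a) := hre.add_odd hao
    exact (h1.mul h2).add_even ((hre.mul_left (x * (r + a))))
  exact (Nat.not_odd_iff_even.mpr heven) hodd
end
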